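/- The projective dual of a PGA point is its homogeneous vector representation: for every x ∈ E = span{e₁, e₂, e₃}, the PGA point P(x) := I_E + ι(x)^{*_E} ι(e₀) satisfies P(x)^{*_P} = ι(e₀ + x). -/

import Mathlib

/-!
With `E₀ := e₀ ∧ e∞ = e₀e∞ + 1` one has `E₀² = 1`, `e∞E₀ = -e∞`, and `E₀` commutes with `I_E`.
Wedges of mutually orthogonal vectors are geometric products, which gives `I_c = -I_E E₀` and
`P(x) ∧ e∞ = I_E e∞ + x^{*_E} E₀`. Multiplying out with `I_E² = -1` gives
`(P(x) ∧ e∞) I_c⁻¹ = ι x - e∞`, which `♯` sends to `ι x + e₀`.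
-/

open CliffordAlgebra

/-- The matrix of the CGA inner product on `V = ℝ⁵`; indices `0, 1, 2, 3, 4`
correspond to the basis `e₀, e₁, e₂, e₃, e∞`. -/
def Bmat : Matrix (Fin 5) (Fin 5) ℝ :=
  !![0, 0, 0, 0, -1;
     0, 1, 0, 0, 0;
     0, 0, 1, 0, 0;
     0, 0, 0, 1, 0;
     -1, 0, 0, 0, 0]

/-- The CGA quadratic form
`Q(a e₀ + x₁e₁ + x₂e₂ + x₃e₃ + b e∞) = x₁² + x₂² + x₃² − 2ab`. -/
noncomputable def Q : QuadraticForm ℝ (Fin 5 → ℝ) := Bmat.toQuadraticMap'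

/-- The basis vectors of `V = ℝ⁵`: `e 0 = e₀`, `e 1, e 2, e 3` Euclidean, `e 4 = e∞`. -/
def e (i : Fin 5) : Fin 5 → ℝ := Pi.single i 1

/-- The linear map `♯ : V → V` fixing `e₁, e₂, e₃` and sending `e₀ ↦ -e∞`, `e∞ ↦ -e₀`. -/
def sharpV : (Fin 5 → ℝ) →ₗ[ℝ] (Fin 5 → ℝ) where
  toFun v i := if i = 0 then -(v 4) else if i = 4 then -(v 0) else v i
  map_add' u v := by
    funext i
    by_cases h : i = 0 <;> by_cases h' : i = 4 <;> simp [h, h'] <;> ring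
  map_smul' c v := by
    funext i
    by_cases h : i = 0 <;> by_cases h' : i = 4 <;> simp [h, h'] <;> ring

/-- Outer (wedge) product of a multivector with a vector:
`A ∧ v := ½ (A ι(v) + ι(v) α(A))`, where `α` is the grade involution. -/
noncomputable def wedgeVec (A : CliffordAlgebra Q) (v : Fin 5 → ℝ) : CliffordAlgebra Q :=
  (1 / 2 : ℝ) • (A * ι Q v + ι Q v * involute A)

/-- The conformal pseudoscalar `I_c = (((e₀ ∧ e₁) ∧ e₂) ∧ e₃) ∧ e∞`. -/
noncomputable def Ic : CliffordAlgebra Q :=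
  wedgeVec (wedgeVec (wedgeVec (wedgeVec (ι Q (e 0)) (e 1)) (e 2)) (e 3)) (e 4)

/-- The Euclidean pseudoscalar `I_E = ι(e₁) ι(e₂) ι(e₃)`. -/
noncomputable def IE : CliffordAlgebra Q := ι Q (e 1) * ι Q (e 2) * ι Q (e 3)

/-- The Euclidean dual `X^{*_E} := X I_E⁻¹ = -X I_E`. -/
noncomputable def dualE (X : CliffordAlgebra Q) : CliffordAlgebra Q := -(X * IE)

/-- The PGA representation of the Euclidean point `x`: `P(x) = I_E + x^{*_E} e₀`. -/
noncomputable def Ppt (x : Fin 5 → ℝ) : CliffordAlgebra Q :=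
  IE + dualE (ι Q x) * ι Q (e 0)

/-- The projective (PGA) dual `A^{*_P} := ♯((A ∧ e∞) I_c⁻¹)`, with `I_c⁻¹ = -I_c`,
expressed relative to a realization `F` of the involution `♯` on the Clifford algebra
(i.e. `F` is the algebra endomorphism induced by the isometry `♯ : V → V`,
characterized by `F (ι v) = ι (♯ v)`). -/
noncomputable def dualP (F : CliffordAlgebra Q →ₐ[ℝ] CliffordAlgebra Q)
    (A : CliffordAlgebra Q) : CliffordAlgebra Q :=
  F (wedgeVec A (e 4) * (-Ic))


lemma mul_mul_self_of_anticomm {R : Type*} [Ring R] {a b c : R}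
    (hab : b * a = -(a * b)) (hac : c * a = -(a * c)) (hbc : c * b = -(b * c))
    (ha : a * a = 1) (hb : b * b = 1) (hc : c * c = 1) :
    a * b * c * (a * b * c) = -1 :=
  calc a * b * c * (a * b * c) = a * b * (c * a) * b * c := by noncomm_ring
    _ = -(a * (b * a) * (c * b) * c) := by rw [hac]; noncomm_ring
    _ = -(a * a * (b * b) * (c * c)) := by rw [hab, hbc]; noncomm_ring
    _ = -1 := by rw [ha, hb, hc, one_mul, one_mul]

lemma CliffordAlgebra.ι_mul_involute_mul_ι {R M : Type*} [CommRing R] [AddCommGroup M]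
    [Module R M] {q : QuadraticForm R M} {X : CliffordAlgebra q} {u v : M}
    (hX : ι q v * involute X = X * ι q v) (huv : q.IsOrtho v u) :
    ι q v * involute (X * ι q u) = X * ι q u * ι q v := by
  rw [map_mul, involute_ι, ← mul_assoc, hX, mul_neg, mul_assoc, ι_mul_ι_comm_of_isOrtho huv,
    mul_neg, neg_neg, mul_assoc]

lemma Q_apply (v : Fin 5 → ℝ) : Q v = v 1 ^ 2 + v 2 ^ 2 + v 3 ^ 2 - 2 * v 0 * v 4 := by
  rw [show Q = Bmat.toQuadraticForm' from rfl]
  simp [Matrix.toQuadraticForm', LinearMap.BilinMap.toQuadraticMap_apply,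
    Matrix.toLinearMap₂'_apply, Bmat, Fin.sum_univ_five]
  ring

lemma isOrtho_iff (u v : Fin 5 → ℝ) :
    Q.IsOrtho u v ↔ u 1 * v 1 + u 2 * v 2 + u 3 * v 3 = u 0 * v 4 + u 4 * v 0 := by
  simp only [QuadraticMap.isOrtho_def, Q_apply, Pi.add_apply]
  constructor
  · intro h; linear_combination h / 2
  · intro h; linear_combination 2 * h

lemma isOrtho_e_zero {x : Fin 5 → ℝ} (hx : x 4 = 0) : Q.IsOrtho (e 0) x := by
  simp [isOrtho_iff, e, hx]

lemma isOrtho_e_four {x : Fin 5 → ℝ} (hx : x 0 = 0) : Q.IsOrtho (e 4) x := by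
  simp [isOrtho_iff, e, hx]

lemma isOrtho_e_e {i j : Fin 5} (hi0 : i ≠ 0 := by decide) (hi4 : i ≠ 4 := by decide)
    (hij : i ≠ j := by decide) : Q.IsOrtho (e i) (e j) := by
  fin_cases i <;> fin_cases j <;> simp_all [isOrtho_iff, e]

lemma ι_e_mul_self (i : Fin 5) : ι Q (e i) * ι Q (e i) = algebraMap ℝ _ (Bmat i i) := by
  rw [ι_sq_scalar, Q_apply]
  fin_cases i <;> simp [e, Bmat]

lemma ι_e_zero_mul_self : ι Q (e 0) * ι Q (e 0) = 0 := by
  rw [ι_e_mul_self]; simp [Bmat]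

lemma ι_e_four_mul_self : ι Q (e 4) * ι Q (e 4) = 0 := by
  rw [ι_e_mul_self]; simp [Bmat]

lemma ι_e_four_mul_ι_e_zero : ι Q (e 4) * ι Q (e 0) = -(ι Q (e 0) * ι Q (e 4)) - 2 := by
  rw [ι_mul_ι_comm, QuadraticMap.polar, Q_apply, Q_apply, Q_apply]
  simp [e, map_ofNat]
  abel

lemma sharpV_of_euclidean {x : Fin 5 → ℝ} (h0 : x 0 = 0) (h4 : x 4 = 0) : sharpV x = x := by
  funext i
  fin_cases i <;> simp [sharpV, h0, h4]

lemma sharpV_e_four : sharpV (e 4) = -e 0 := by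
  funext i
  fin_cases i <;> simp [sharpV, e]

lemma IE_mul_IE : IE * IE = -1 := by
  have hsq : ∀ i : Fin 5, i ≠ 0 → i ≠ 4 → ι Q (e i) * ι Q (e i) = 1 := by
    intro i h0 h4
    rw [ι_e_mul_self]
    fin_cases i <;> simp_all [Bmat]
  exact mul_mul_self_of_anticomm (ι_mul_ι_comm_of_isOrtho isOrtho_e_e)
    (ι_mul_ι_comm_of_isOrtho isOrtho_e_e) (ι_mul_ι_comm_of_isOrtho isOrtho_e_e)
    (hsq 1 (by decide) (by decide)) (hsq 2 (by decide) (by decide)) (hsq 3 (by decide) (by decide))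

lemma ι_mul_IE {v : Fin 5 → ℝ} (h1 : Q.IsOrtho v (e 1)) (h2 : Q.IsOrtho v (e 2))
    (h3 : Q.IsOrtho v (e 3)) : ι Q v * IE = -(IE * ι Q v) := by
  simp only [IE, mul_assoc, ι_mul_ι_mul_of_isOrtho _ h1, ι_mul_ι_mul_of_isOrtho _ h2,
    ι_mul_ι_comm_of_isOrtho h3, mul_neg, neg_neg]

lemma ι_e_zero_mul_IE : ι Q (e 0) * IE = -(IE * ι Q (e 0)) :=
  ι_mul_IE (isOrtho_e_zero (by simp [e])) (isOrtho_e_zero (by simp [e]))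
    (isOrtho_e_zero (by simp [e]))

lemma ι_e_four_mul_IE : ι Q (e 4) * IE = -(IE * ι Q (e 4)) :=
  ι_mul_IE (isOrtho_e_four (by simp [e])) (isOrtho_e_four (by simp [e]))
    (isOrtho_e_four (by simp [e]))

lemma involute_IE : involute IE = -IE := by
  simp [IE]

lemma dualE_mul_IE (X : CliffordAlgebra Q) : dualE X * IE = X := by
  rw [dualE, neg_mul, mul_assoc, IE_mul_IE, mul_neg_one, neg_neg]

lemma wedgeVec_add (A B : CliffordAlgebra Q) (v : Fin 5 → ℝ) :
    wedgeVec (A + B) v = wedgeVec A v + wedgeVec B v := by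
  simp only [wedgeVec, map_add, add_mul, mul_add, smul_add]
  abel

lemma wedgeVec_one (v : Fin 5 → ℝ) : wedgeVec 1 v = ι Q v := by
  simp only [wedgeVec, map_one, one_mul, mul_one, ← two_smul ℝ (ι Q v), smul_smul]
  norm_num

lemma wedgeVec_mul_left {D : CliffordAlgebra Q} (A : CliffordAlgebra Q) {v : Fin 5 → ℝ}
    (h : ι Q v * involute D = D * ι Q v) : wedgeVec (D * A) v = D * wedgeVec A v := by
  simp only [wedgeVec, map_mul, ← mul_assoc, h, mul_smul_comm, mul_add]

lemma wedgeVec_eq_mul {D : CliffordAlgebra Q} {v : Fin 5 → ℝ}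
    (h : ι Q v * involute D = D * ι Q v) : wedgeVec D v = D * ι Q v := by
  simpa [wedgeVec_one] using wedgeVec_mul_left 1 h

noncomputable def E0 : CliffordAlgebra Q := wedgeVec (ι Q (e 0)) (e 4)

lemma E0_eq : E0 = ι Q (e 0) * ι Q (e 4) + 1 :=
  calc E0 = (1 / 2 : ℝ) • (2 : ℝ) • (ι Q (e 0) * ι Q (e 4) + 1) := by
        rw [E0, wedgeVec, involute_ι, mul_neg, ι_e_four_mul_ι_e_zero, two_smul]
        congr 1; rw [← one_add_one_eq_two]; abel
    _ = ι Q (e 0) * ι Q (e 4) + 1 := by rw [smul_smul]; norm_num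

lemma E0_mul_E0 : E0 * E0 = 1 :=
  calc E0 * E0
      = ι Q (e 0) * (ι Q (e 4) * ι Q (e 0)) * ι Q (e 4) + 2 * (ι Q (e 0) * ι Q (e 4)) + 1 := by
        rw [E0_eq]; noncomm_ring
    _ = -(ι Q (e 0) * ι Q (e 0) * (ι Q (e 4) * ι Q (e 4))) + 1 := by
        rw [ι_e_four_mul_ι_e_zero]; noncomm_ring
    _ = 1 := by rw [ι_e_zero_mul_self, zero_mul, neg_zero, zero_add]

lemma ι_e_four_mul_E0 : ι Q (e 4) * E0 = -ι Q (e 4) :=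
  calc ι Q (e 4) * E0 = ι Q (e 4) * ι Q (e 0) * ι Q (e 4) + ι Q (e 4) := by
        rw [E0_eq]; noncomm_ring
    _ = -(ι Q (e 0) * (ι Q (e 4) * ι Q (e 4))) - ι Q (e 4) := by
        rw [ι_e_four_mul_ι_e_zero]; noncomm_ring
    _ = -ι Q (e 4) := by rw [ι_e_four_mul_self, mul_zero, neg_zero, zero_sub]

lemma IE_mul_E0 : IE * E0 = E0 * IE := by
  rw [E0_eq, mul_add, add_mul, mul_one, one_mul, ← mul_assoc, ← neg_neg (IE * ι Q (e 0)),
    ← ι_e_zero_mul_IE, neg_mul, mul_assoc, ← neg_neg (IE * ι Q (e 4)), ← ι_e_four_mul_IE,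
    mul_neg, neg_neg, mul_assoc]

lemma Ic_eq : Ic = -(IE * E0) := by
  have base : ∀ k : Fin 5, k ≠ 0 → k ≠ 4 →
      ι Q (e k) * involute (ι Q (e 0)) = ι Q (e 0) * ι Q (e k) := fun k hk0 hk4 => by
    rw [involute_ι, mul_neg, ι_mul_ι_comm_of_isOrtho (isOrtho_e_e hk0 hk4 hk0), neg_neg]
  have h2 : ι Q (e 2) * involute (ι Q (e 0) * ι Q (e 1)) = ι Q (e 0) * ι Q (e 1) * ι Q (e 2) :=
    ι_mul_involute_mul_ι (base 2 (by decide) (by decide)) isOrtho_e_e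
  have h3 : ι Q (e 3) * involute (ι Q (e 0) * ι Q (e 1) * ι Q (e 2)) =
      ι Q (e 0) * ι Q (e 1) * ι Q (e 2) * ι Q (e 3) :=
    ι_mul_involute_mul_ι (ι_mul_involute_mul_ι (base 3 (by decide) (by decide)) isOrtho_e_e)
      isOrtho_e_e
  have h4 : ι Q (e 4) * involute (-IE) = -IE * ι Q (e 4) := by
    rw [map_neg, involute_IE, neg_neg, neg_mul, ι_e_four_mul_IE]
  have hprod : ι Q (e 0) * ι Q (e 1) * ι Q (e 2) * ι Q (e 3) = -IE * ι Q (e 0) := by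
    rw [neg_mul, ← ι_e_zero_mul_IE, IE]; noncomm_ring
  rw [Ic, wedgeVec_eq_mul (base 1 (by decide) (by decide)), wedgeVec_eq_mul h2,
    wedgeVec_eq_mul h3, hprod, wedgeVec_mul_left _ h4, neg_mul, E0]

lemma wedgeVec_Ppt {x : Fin 5 → ℝ} (hx : x 0 = 0) :
    wedgeVec (Ppt x) (e 4) = IE * ι Q (e 4) + dualE (ι Q x) * E0 := by
  have hIE : ι Q (e 4) * involute IE = IE * ι Q (e 4) := by
    rw [involute_IE, mul_neg, ι_e_four_mul_IE, neg_neg]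
  have hdual : ι Q (e 4) * involute (dualE (ι Q x)) = dualE (ι Q x) * ι Q (e 4) := by
    rw [dualE, map_neg, map_mul, involute_ι, involute_IE, neg_mul_neg, mul_neg, ← mul_assoc,
      ι_mul_ι_comm_of_isOrtho (isOrtho_e_four hx), neg_mul, mul_assoc, ι_e_four_mul_IE]
    noncomm_ring
  rw [Ppt, wedgeVec_add, wedgeVec_eq_mul hIE, wedgeVec_mul_left _ hdual, E0]

lemma wedgeVec_Ppt_mul_neg_Ic {x : Fin 5 → ℝ} (hx : x 0 = 0) :
    wedgeVec (Ppt x) (e 4) * -Ic = ι Q x - ι Q (e 4) :=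
  calc wedgeVec (Ppt x) (e 4) * -Ic
      = IE * (ι Q (e 4) * IE) * E0 + dualE (ι Q x) * IE * (E0 * E0) := by
        rw [wedgeVec_Ppt hx, Ic_eq, neg_neg, add_mul, mul_assoc (dualE _), ← mul_assoc E0,
          ← IE_mul_E0]
        noncomm_ring
    _ = ι Q x - ι Q (e 4) := by
        rw [ι_e_four_mul_IE, mul_neg, ← mul_assoc, IE_mul_IE, neg_one_mul, neg_neg,
          ι_e_four_mul_E0, E0_mul_E0, mul_one, dualE_mul_IE]
        abel

/-- The projective dual of a PGA point is its homogeneous vector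
representation: for every `x ∈ span{e₁,e₂,e₃}`, `P(x)^{*_P} = ι(e₀ + x)`. -/
theorem dualP_point (F : CliffordAlgebra Q →ₐ[ℝ] CliffordAlgebra Q)
    (hF : ∀ v : Fin 5 → ℝ, F (ι Q v) = ι Q (sharpV v)) :
    ∀ x : Fin 5 → ℝ, x 0 = 0 → x 4 = 0 →
      dualP F (Ppt x) = ι Q (e 0 + x) := by
  intro x h0 h4
  rw [dualP, wedgeVec_Ppt_mul_neg_Ic h0, map_sub, hF, hF, sharpV_of_euclidean h0 h4,
    sharpV_e_four, map_neg, map_add]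
  abel
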